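/- arXiv:2103.07353 — 4 statements merged into one kernel-verified Lean document; each statement's English description precedes it below -/
import Mathlib

section
/- Let G be a finite graph whose edges have distinct weights, and for each real number t let G_{<t} be the subgraph of G with all vertices and only edges of weight less than t. Let u, v be vertices connected in G, and let w* be the max edge-weight of the unique u–v path in the (unique) minimum spanning forest of G. Then for any t, u and v are connected in G_{<t} if and only if t > w*. -/
open scoped Classical

/-- Total weight of the edges of a graph. -/
noncomputable def weightSum {V : Type*} [Fintype V] (w : Sym2 V → ℝ) (T : SimpleGraph V) : ℝ :=
  ∑ e ∈ (Set.toFinite T.edgeSet).toFinset, w e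

/-- `T` is the unique minimum spanning forest of the weighted graph `(G, w)`:
it is a spanning forest of `G`, and every other spanning forest has strictly
larger total weight. -/
def IsUniqueMSF {V : Type*} [Fintype V] (w : Sym2 V → ℝ) (G T : SimpleGraph V) : Prop :=
  T ≤ G ∧ T.IsAcyclic ∧ (∀ a b : V, G.Reachable a b ↔ T.Reachable a b) ∧
    ∀ T' : SimpleGraph V, T' ≤ G → T'.IsAcyclic →
      (∀ a b : V, G.Reachable a b ↔ T'.Reachable a b) → T' ≠ T →
        weightSum w T < weightSum w T'

open SimpleGraph

section Aux

variable {V : Type*}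

/-- A walk from a `P`-vertex to a non-`P` vertex crosses the cut. -/
lemma cross_lemma {H : SimpleGraph V} (P : V → Prop) :
    ∀ {c d : V} (q : H.Walk c d), P c → ¬ P d →
      ∃ x y, H.Adj x y ∧ s(x, y) ∈ q.edges ∧ P x ∧ ¬ P y := by
  intro c d q
  induction q with
  | nil => intro hc hd; exact absurd hc hd
  | @cons c c' d h q ih =>
    intro hc hd
    by_cases h2 : P c'
    · obtain ⟨x, y, hxy, hm, hx, hy⟩ := ih h2 hd
      exact ⟨x, y, hxy, List.mem_cons_of_mem _ hm, hx, hy⟩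
    · exact ⟨c, c', h, List.mem_cons_self, hc, h2⟩

/-- Trichotomy for reachability after deleting a single edge. -/
lemma reach_del {T : SimpleGraph V} (a b : V) :
    ∀ {c d : V}, T.Walk c d →
      (T.deleteEdges {s(a, b)}).Reachable c d ∨
      ((T.deleteEdges {s(a, b)}).Reachable c a ∧ (T.deleteEdges {s(a, b)}).Reachable b d) ∨
      ((T.deleteEdges {s(a, b)}).Reachable c b ∧ (T.deleteEdges {s(a, b)}).Reachable a d) := by
  intro c d W
  induction W with
  | nil => exact Or.inl (Reachable.refl _)
  | @cons c c' d h W ih =>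
    by_cases he : s(c, c') = s(a, b)
    · rw [Sym2.eq_iff] at he
      rcases he with ⟨rfl, rfl⟩ | ⟨rfl, rfl⟩
      · rcases ih with h1 | ⟨h1, h2⟩ | ⟨h1, h2⟩
        · exact Or.inr (Or.inl ⟨Reachable.refl _, h1⟩)
        · exact Or.inl (h1.symm.trans h2)
        · exact Or.inl h2
      · rcases ih with h1 | ⟨h1, h2⟩ | ⟨h1, h2⟩
        · exact Or.inr (Or.inr ⟨Reachable.refl _, h1⟩)
        · exact Or.inl h2
        · exact Or.inl (h1.symm.trans h2)
    · have hadj : (T.deleteEdges {s(a, b)}).Adj c c' :=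
        SimpleGraph.deleteEdges_adj.mpr ⟨h, by simpa using he⟩
      rcases ih with h1 | ⟨h1, h2⟩ | ⟨h1, h2⟩
      · exact Or.inl (hadj.reachable.trans h1)
      · exact Or.inr (Or.inl ⟨hadj.reachable.trans h1, h2⟩)
      · exact Or.inr (Or.inr ⟨hadj.reachable.trans h1, h2⟩)

/-- Lift reachability along a map that preserves all edges except possibly `s(a,b)`,
whose endpoints are reachable in the target. -/
lemma reach_lift {T T'' : SimpleGraph V} {a b : V} (hab : T''.Reachable a b)
    (h : ∀ c d : V, T.Adj c d → s(c, d) = s(a, b) ∨ T''.Adj c d) :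
    ∀ {c d : V}, T.Walk c d → T''.Reachable c d := by
  intro c d W
  induction W with
  | nil => exact Reachable.refl _
  | @cons c c' d h' W ih =>
    rcases h _ _ h' with he | ha
    · rw [Sym2.eq_iff] at he
      rcases he with ⟨rfl, rfl⟩ | ⟨rfl, rfl⟩
      · exact hab.trans ih
      · exact hab.symm.trans ih
    · exact ha.reachable.trans ih

/-- The exchange argument: if `u`-side and `v`-side of the deleted tree edge `s(a,b)` are
reconnected by a path of edges of weight `< t ≤ w s(a,b)`, then `T` is not minimal. -/
lemma exchange {V : Type*} [Fintype V] (w : Sym2 V → ℝ) (G T : SimpleGraph V)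
    (hTG : T ≤ G) (hTacyc : T.IsAcyclic)
    (hreach : ∀ c d : V, G.Reachable c d ↔ T.Reachable c d)
    (hmin : ∀ T' : SimpleGraph V, T' ≤ G → T'.IsAcyclic →
      (∀ c d : V, G.Reachable c d ↔ T'.Reachable c d) → T' ≠ T →
        weightSum w T < weightSum w T')
    (t : ℝ) (u v a b : V) (hadj : T.Adj a b)
    (hua : (T.deleteEdges {s(a, b)}).Reachable u a)
    (hbv : (T.deleteEdges {s(a, b)}).Reachable b v)
    (hnuv : ¬ (T.deleteEdges {s(a, b)}).Reachable u v)
    (ht : t ≤ w s(a, b))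
    (hH : (SimpleGraph.fromEdgeSet {e | e ∈ G.edgeSet ∧ w e < t}).Reachable u v) : False := by
  classical
  set T' := T.deleteEdges {s(a, b)} with hT'def
  set H := SimpleGraph.fromEdgeSet {e | e ∈ G.edgeSet ∧ w e < t} with hHdef
  have hT'le : T' ≤ T := SimpleGraph.deleteEdges_le _
  obtain ⟨q⟩ := hH
  obtain ⟨x, y, hxyH, hfq, hSx, hSy⟩ :=
    cross_lemma (fun z => T'.Reachable u z) q (Reachable.refl u) hnuv
  have hfG : s(x, y) ∈ G.edgeSet ∧ w s(x, y) < t := by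
    have := hxyH
    rw [hHdef, SimpleGraph.fromEdgeSet_adj] at this
    exact this.1
  have hxy : x ≠ y := by
    have := hxyH
    rw [hHdef, SimpleGraph.fromEdgeSet_adj] at this
    exact this.2
  have hwf : w s(x, y) < w s(a, b) := lt_of_lt_of_le hfG.2 ht
  -- y is T-reachable from u
  have hTy : T.Reachable u y := by
    refine (hreach u y).mp ?_
    exact (hSx.mono (le_trans hT'le hTG)).trans
      ((G.mem_edgeSet.mp hfG.1)).reachable
  -- b-side contains y
  have hby : T'.Reachable b y := by
    obtain ⟨Wuy⟩ := hTy
    rcases reach_del a b Wuy with h1 | ⟨h1, h2⟩ | ⟨h1, h2⟩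
    · exact absurd h1 hSy
    · exact h2
    · exact absurd (h1.trans hbv) hnuv
  have hfnotT' : s(x, y) ∉ T'.edgeSet := by
    intro h
    exact hSy (hSx.trans (T'.mem_edgeSet.mp h).reachable)
  have hfne : s(x, y) ≠ s(a, b) := fun h => absurd (congrArg w h) (ne_of_lt hwf)
  have hfnotT : s(x, y) ∉ T.edgeSet := by
    intro h
    apply hfnotT'
    rw [hT'def, SimpleGraph.edgeSet_deleteEdges]
    exact ⟨h, by simpa using hfne⟩
  -- the exchanged graph
  set T'' := SimpleGraph.fromEdgeSet (insert s(x, y) (T.edgeSet \ {s(a, b)})) with hT''def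
  have hEs : T''.edgeSet = insert s(x, y) (T.edgeSet \ {s(a, b)}) := by
    rw [hT''def, SimpleGraph.edgeSet_fromEdgeSet]
    ext e
    simp only [Set.mem_diff, Set.mem_setOf_eq]
    constructor
    · exact fun h => h.1
    · intro h
      refine ⟨h, ?_⟩
      rcases h with rfl | ⟨hmem, -⟩
      · exact fun hdiag => hxy (Sym2.mk_isDiag_iff.mp hdiag)
      · exact T.not_isDiag_of_mem_edgeSet hmem
  have hT'le'' : T' ≤ T'' := by
    rw [← SimpleGraph.edgeSet_subset_edgeSet, hEs, hT'def, SimpleGraph.edgeSet_deleteEdges]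
    exact fun e he => Or.inr he
  have hadjxy'' : T''.Adj x y := by
    rw [hT''def, SimpleGraph.fromEdgeSet_adj]
    exact ⟨Set.mem_insert _ _, hxy⟩
  have hT''G : T'' ≤ G := by
    rw [← SimpleGraph.edgeSet_subset_edgeSet, hEs]
    rintro e (rfl | ⟨he, -⟩)
    · exact hfG.1
    · exact SimpleGraph.edgeSet_mono hTG he
  have hab'' : T''.Reachable a b :=
    (((hua.symm.trans hSx).mono hT'le'').trans hadjxy''.reachable).trans
      ((hby.mono hT'le'').symm)
  have hreach'' : ∀ c d : V, G.Reachable c d ↔ T''.Reachable c d := by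
    intro c d
    constructor
    · intro h
      obtain ⟨W⟩ := (hreach c d).mp h
      refine reach_lift hab'' ?_ W
      intro c' d' h'
      by_cases he : s(c', d') = s(a, b)
      · exact Or.inl he
      · refine Or.inr ?_
        rw [hT''def, SimpleGraph.fromEdgeSet_adj]
        exact ⟨Or.inr ⟨(T.mem_edgeSet.mpr h'), by simpa using he⟩, h'.ne⟩
    · exact fun h => h.mono hT''G
  have hT''acyc : T''.IsAcyclic := by
    intro z c hc
    by_cases hf : s(x, y) ∈ c.edges
    · have hcyc := SimpleGraph.adj_and_reachable_delete_edges_iff_exists_cycle.mpr ⟨z, c, hc, hf⟩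
      have hdel : (T'' \ SimpleGraph.fromEdgeSet {s(x, y)}) ≤ T' := by
        rw [← SimpleGraph.edgeSet_subset_edgeSet]
        have : (T'' \ SimpleGraph.fromEdgeSet {s(x, y)})
            = T''.deleteEdges {s(x, y)} := rfl
        rw [this, SimpleGraph.edgeSet_deleteEdges, hEs, hT'def,
          SimpleGraph.edgeSet_deleteEdges]
        rintro e ⟨(rfl | ⟨he1, he2⟩), hne⟩
        · exact absurd (Set.mem_singleton _) hne
        · exact ⟨he1, he2⟩
      exact hSy (hSx.trans (hcyc.2.mono hdel))
    · have hedges : ∀ e ∈ c.edges, e ∈ T.edgeSet := by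
        intro e he
        have := c.edges_subset_edgeSet he
        rw [hEs] at this
        rcases this with rfl | ⟨h1, -⟩
        · exact absurd he hf
        · exact h1
      exact hTacyc (c.transfer T hedges) (hc.transfer hedges)
  have hT''ne : T'' ≠ T := by
    intro h
    have : s(a, b) ∈ T''.edgeSet := by rw [h]; exact T.mem_edgeSet.mpr hadj
    rw [hEs] at this
    rcases this with h' | ⟨-, h'⟩
    · exact hfne h'.symm
    · exact h' rfl
  have hWlt : weightSum w T'' < weightSum w T := by
    have hA : (Set.toFinite T''.edgeSet).toFinset =
        insert s(x, y) (((Set.toFinite T.edgeSet).toFinset).erase s(a, b)) := by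
      ext e
      simp only [Set.Finite.mem_toFinset, hEs, Set.mem_insert_iff, Set.mem_diff,
        Set.mem_singleton_iff, Finset.mem_insert, Finset.mem_erase]
      tauto
    have hmemT : s(a, b) ∈ (Set.toFinite T.edgeSet).toFinset := by
      rw [Set.Finite.mem_toFinset]; exact T.mem_edgeSet.mpr hadj
    have hnotmem : s(x, y) ∉ ((Set.toFinite T.edgeSet).toFinset).erase s(a, b) := by
      intro h
      exact hfnotT (Set.Finite.mem_toFinset _ |>.mp (Finset.mem_of_mem_erase h))
    rw [weightSum, weightSum, hA, Finset.sum_insert hnotmem,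
      ← Finset.sum_erase_add _ _ hmemT]
    linarith
  exact absurd (hmin T'' hT''G hT''acyc hreach'' hT''ne) (not_lt.mpr (le_of_lt hWlt))

end Aux

/-- with `w*` the max edge-weight of the unique `u`–`v` path in the
unique MSF `T` of `G`, the vertices `u`, `v` are connected in the threshold
subgraph `G_{<t}` (all vertices, edges of weight `< t`) iff `t > w*`. -/
theorem stmt_1 {V : Type*} [Fintype V] (w : Sym2 V → ℝ) (G T : SimpleGraph V)
    (hdist : Set.InjOn w G.edgeSet) (hMSF : IsUniqueMSF w G T)
    (u v : V) (huv : G.Reachable u v) (p : T.Walk u v) (hp : p.IsPath)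
    (wstar : ℝ) (hmax : (p.edges.map w).maximum = (wstar : WithBot ℝ)) :
    ∀ t : ℝ,
      (SimpleGraph.fromEdgeSet {e | e ∈ G.edgeSet ∧ w e < t}).Reachable u v ↔ wstar < t := by
  intro t
  classical
  obtain ⟨hTG, hTacyc, hreach, hmin⟩ := hMSF
  obtain ⟨e₀, he₀p, he₀w⟩ := List.mem_map.mp (List.maximum_mem hmax)
  constructor
  · -- hard direction
    intro hreachH
    by_contra hnt
    push_neg at hnt
    -- hnt : t ≤ wstar
    revert he₀p he₀w
    induction e₀ using Sym2.ind with
    | _ a b =>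
      intro he₀p he₀w
      have hadj : T.Adj a b := p.adj_of_mem_edges he₀p
      have ht : t ≤ w s(a, b) := he₀w ▸ hnt
      set T' := T.deleteEdges {s(a, b)} with hT'def
      have hT'le : T' ≤ T := SimpleGraph.deleteEdges_le _
      -- u and v are not T'-reachable
      have hnuv : ¬ T'.Reachable u v := by
        rintro ⟨W⟩
        have hWT : ∀ e ∈ W.edges, e ∈ T.edgeSet := fun e he =>
          SimpleGraph.edgeSet_mono hT'le (W.edges_subset_edgeSet he)
        have huniq := SimpleGraph.isAcyclic_iff_path_unique.mp hTacyc
          ((W.transfer T hWT).toPath) ⟨p, hp⟩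
        have hmem : s(a, b) ∈ (W.transfer T hWT).edges := by
          have : ((W.transfer T hWT).toPath : T.Walk u v).edges = p.edges := by
            rw [huniq]
          exact (SimpleGraph.Walk.edges_toPath_subset (W.transfer T hWT))
            (by rw [this]; exact he₀p)
        rw [SimpleGraph.Walk.edges_transfer] at hmem
        have : s(a, b) ∈ T'.edgeSet := W.edges_subset_edgeSet hmem
        rw [hT'def, SimpleGraph.edgeSet_deleteEdges] at this
        exact this.2 rfl
      -- the path p places u on one side, v on the other
      rcases reach_del a b p with h1 | ⟨h1, h2⟩ | ⟨h1, h2⟩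
      · exact hnuv h1
      · exact exchange w G T hTG hTacyc hreach hmin t u v a b hadj h1 h2 hnuv ht hreachH
      · have hadj' : T.Adj b a := hadj.symm
        have hswap : T.deleteEdges {s(b, a)} = T.deleteEdges {s(a, b)} := by
          rw [Sym2.eq_swap]
        refine exchange w G T hTG hTacyc hreach hmin t u v b a hadj' ?_ ?_ ?_ ?_ hreachH
        · rw [hswap]; exact h1
        · rw [hswap]; exact h2
        · rw [hswap]; exact hnuv
        · rw [Sym2.eq_swap]; exact ht
  · -- easy direction
    intro hlt
    have hpe : ∀ e ∈ p.edges,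
        e ∈ (SimpleGraph.fromEdgeSet {e | e ∈ G.edgeSet ∧ w e < t}).edgeSet := by
      intro e he
      have heT : e ∈ T.edgeSet := p.edges_subset_edgeSet he
      have heG : e ∈ G.edgeSet := SimpleGraph.edgeSet_mono hTG heT
      have hle : w e ≤ wstar := List.le_maximum_of_mem (List.mem_map_of_mem (f := w) he) hmax
      rw [SimpleGraph.edgeSet_fromEdgeSet]
      exact ⟨⟨heG, lt_of_le_of_lt hle hlt⟩, T.not_isDiag_of_mem_edgeSet heT⟩
    exact ⟨p.transfer _ hpe⟩
end

section
/- Let M: V_0 ↔ V_1 ↔ ... ↔ V_m be a zigzag module of finite-dimensional Z/2-vector spaces with V_0 = 0, in which every linear map is an isomorphism, an injection with 1-dimensional cokernel, or a surjection with 1-dimensional kernel. Let π: P(M) → N(M) be a bijection from the positive indices to the negative indices of M such that for every b ∈ P(M), b ≤ π(b) and the interval [b, π(b)] admits a set of representatives. Then M decomposes as the direct sum of interval submodules over the intervals [b, π(b)] for b ∈ P(M); in particular the zigzag barcode of M equals {[b, π(b)] : b ∈ P(M)}. -/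
section Aux
open Submodule Set
variable {K M N : Type*} [Field K] [AddCommGroup M] [Module K M]
  [AddCommGroup N] [Module K N]

/-- quotient has rank 1 and v ∉ p implies p ⊔ span{v} = ⊤ -/
lemma aux_sup_span (p : Submodule K M) (h : Module.finrank K (M ⧸ p) = 1)
    {v : M} (hv : v ∉ p) : p ⊔ (K ∙ v) = ⊤ := by
  have hv0 : p.mkQ v ≠ 0 := by
    simpa [Submodule.Quotient.mk_eq_zero] using hv
  have hsp : Submodule.span K ({p.mkQ v} : Set (M ⧸ p)) = ⊤ :=
    (finrank_eq_one_iff_of_nonzero _ hv0).mp h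
  rw [eq_top_iff]
  intro x _
  have hx : p.mkQ x ∈ Submodule.span K ({p.mkQ v} : Set (M ⧸ p)) := by
    rw [hsp]; trivial
  obtain ⟨c, hc⟩ := Submodule.mem_span_singleton.mp hx
  have : x - c • v ∈ p := by
    rw [← Submodule.Quotient.mk_eq_zero]
    have : p.mkQ (x - c • v) = 0 := by
      simp [map_sub, hc.symm]
    simpa using this
  have hx2 : x = (x - c • v) + c • v := by abel
  rw [hx2]
  exact Submodule.add_mem_sup this (Submodule.smul_mem _ _ (Submodule.mem_span_singleton_self v))

/-- rank-1 submodule containing nonzero v equals span{v} -/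
lemma aux_eq_span (p : Submodule K M) [FiniteDimensional K p]
    (h : Module.finrank K p = 1) {v : M} (hv : v ∈ p) (h0 : v ≠ 0) :
    p = K ∙ v := by
  refine (Submodule.eq_of_le_of_finrank_eq ?_ ?_).symm
  · rwa [Submodule.span_singleton_le_iff_mem]
  · rw [h, finrank_span_singleton h0]

lemma aux_not_surj (f : M →ₗ[K] N) (h : Module.finrank K (N ⧸ LinearMap.range f) = 1) :
    ¬ Function.Surjective f := by
  intro hs
  have : LinearMap.range f = ⊤ := LinearMap.range_eq_top.mpr hs
  have : Subsingleton (N ⧸ LinearMap.range f) :=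
    Submodule.Quotient.subsingleton_iff.mpr this
  rw [Module.finrank_zero_of_subsingleton] at h
  omega

lemma aux_not_inj (f : M →ₗ[K] N) (h : Module.finrank K (LinearMap.ker f) = 1) :
    ¬ Function.Injective f := by
  intro hs
  have : LinearMap.ker f = ⊥ := LinearMap.ker_eq_bot.mpr hs
  rw [this] at h
  rw [finrank_bot] at h
  omega

/-- LI family, distinguished element spans kernel ⇒ images of others LI -/
lemma aux_map_li {ι : Type*} (v : ι → M) (hv : LinearIndependent K v) (a0 : ι)
    (ψ : M →ₗ[K] N) (hker : LinearMap.ker ψ = K ∙ (v a0)) :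
    LinearIndependent K (fun a : {a : ι // a ≠ a0} => ψ (v a.1)) := by
  have hli : LinearIndependent K (fun a : {a : ι // a ≠ a0} => v a.1) :=
    hv.comp _ Subtype.val_injective
  have hnm : v a0 ∉ Submodule.span K (v '' {a | a ≠ a0}) :=
    hv.notMem_span_image (by simp)
  have hrange : Set.range (fun a : {a : ι // a ≠ a0} => v a.1) = v '' {a | a ≠ a0} := by
    ext x; simp [Set.mem_image]
  have hdisj : Disjoint (Submodule.span K (Set.range (fun a : {a : ι // a ≠ a0} => v a.1)))
      (LinearMap.ker ψ) := by
    rw [hker, hrange, Submodule.disjoint_span_singleton]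
    intro h; exact absurd h hnm
  exact hli.map hdisj

lemma aux_map_span {ι : Type*} (v : ι → M) (a0 : ι) (ψ : M →ₗ[K] N)
    (h0 : ψ (v a0) = 0) :
    Submodule.map ψ (Submodule.span K (Set.range (fun a : {a : ι // a ≠ a0} => v a.1)))
      = Submodule.map ψ (Submodule.span K (Set.range v)) := by
  classical
  have hr : Set.range v = Set.range (fun a : {a : ι // a ≠ a0} => v a.1) ∪ {v a0} := by
    ext x
    constructor
    · rintro ⟨a, rfl⟩
      by_cases h : a = a0
      · right; simp [h]
      · left; exact ⟨⟨a, h⟩, rfl⟩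
    · rintro (⟨a, rfl⟩ | hx)
      · exact ⟨a.1, rfl⟩
      · exact ⟨a0, by simpa using hx.symm⟩
  rw [hr, Submodule.span_union, Submodule.map_sup]
  have : Submodule.map ψ (Submodule.span K ({v a0} : Set M)) = ⊥ := by
    rw [Submodule.map_span]
    simp [h0]
  rw [this, sup_bot_eq]

/-- backward-injective span: if ψ injective, w ∉ range ψ, and span(ψ∘u) ⊔ span{w} = ⊤,
then span(range u) = ⊤ -/
lemma aux_binj_span {ι : Type*} (ψ : N →ₗ[K] M) (hinj : Function.Injective ψ)
    (u : ι → N) (w : M) (hw : w ∉ LinearMap.range ψ)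
    (hsp : Submodule.span K (Set.range (fun a => ψ (u a))) ⊔ (K ∙ w) = ⊤) :
    Submodule.span K (Set.range u) = ⊤ := by
  rw [eq_top_iff]
  intro x _
  have hx : ψ x ∈ Submodule.span K (Set.range (fun a => ψ (u a))) ⊔ (K ∙ w) := by
    rw [hsp]; trivial
  obtain ⟨y, hy, z, hz, hyz⟩ := Submodule.mem_sup.mp hx
  obtain ⟨c, rfl⟩ := Submodule.mem_span_singleton.mp hz
  have hrange : Set.range (fun a => ψ (u a)) = ψ '' Set.range u := by
    ext t; simp
  rw [hrange, ← Submodule.map_span] at hy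
  obtain ⟨y', hy', rfl⟩ := hy
  by_cases hc : c = 0
  · subst hc
    rw [zero_smul, add_zero] at hyz
    have hxy := hinj hyz
    rwa [← hxy]
  · exfalso
    apply hw
    refine ⟨c⁻¹ • (x - y'), ?_⟩
    have hcw : c • w = ψ x - ψ y' := by rw [← hyz]; abel
    rw [map_smul, map_sub, ← hcw, smul_smul, inv_mul_cancel₀ hc, one_smul]

/-- backward-surjective span -/
lemma aux_bsurj_span {ι : Type*} (ψ : N →ₗ[K] M) (u : ι → N) (v : N)
    (hker : LinearMap.ker ψ = K ∙ v)
    (hsp : Submodule.span K (Set.range (fun a => ψ (u a))) = ⊤) :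
    (K ∙ v) ⊔ Submodule.span K (Set.range u) = ⊤ := by
  rw [eq_top_iff]
  intro x _
  have hrange : Set.range (fun a => ψ (u a)) = ψ '' Set.range u := by
    ext t; simp
  have hx : ψ x ∈ Submodule.map ψ (Submodule.span K (Set.range u)) := by
    rw [Submodule.map_span, ← hrange, hsp]; exact Submodule.mem_top
  obtain ⟨z, hz, hzx⟩ := hx
  have hk : x - z ∈ LinearMap.ker ψ := by
    rw [LinearMap.mem_ker, map_sub, hzx, sub_self]
  rw [hker] at hk
  have hx2 : x = (x - z) + z := by abel
  rw [hx2]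
  exact Submodule.add_mem_sup hk hz

/-- backward-surjective LI: if ψ∘u is LI and v ≠ 0 with ψ v = 0, then v,u is LI -/
lemma aux_bsurj_li {ι : Type*} (ψ : N →ₗ[K] M) (u : ι → N) (v : N)
    (hli : LinearIndependent K (fun a => ψ (u a))) (hv0 : v ≠ 0) (hvk : ψ v = 0) :
    LinearIndependent K (fun o : Option ι => o.elim v u) := by
  rw [linearIndependent_option]
  constructor
  · exact LinearIndependent.of_comp ψ hli
  · intro hmem
    replace hmem : v ∈ Submodule.span K (Set.range u) := hmem
    obtain ⟨c, hc⟩ := Finsupp.mem_span_range_iff_exists_finsupp.mp hmem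
    have h0 : (c.sum fun i a => a • ψ (u i)) = 0 := by
      have := congrArg ψ hc
      rw [map_finsuppSum] at this
      simp only [map_smul] at this
      rw [this, hvk]
    have := linearIndependent_iff.mp hli c (by
      simp only [Finsupp.linearCombination_apply]; exact h0)
    rw [this] at hc
    simp at hc
    exact hv0 hc.symm

end Aux

section Aux2
open Submodule Set
variable {K M N : Type*} [Field K] [AddCommGroup M] [Module K M]
  [AddCommGroup N] [Module K N]

lemma aux_range_split {ι β : Type*} (v : ι → β) (a0 : ι) :
    Set.range v = Set.range (fun a : {a : ι // a ≠ a0} => v a.1) ∪ {v a0} := by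
  classical
  ext x
  constructor
  · rintro ⟨a, rfl⟩
    by_cases h : a = a0
    · right; simp [h]
    · left; exact ⟨⟨a, h⟩, rfl⟩
  · rintro (⟨a, rfl⟩ | hx)
    · exact ⟨a.1, rfl⟩
    · exact ⟨a0, by simpa using hx.symm⟩

lemma aux_range_option {ι β : Type*} (x : β) (u : ι → β) :
    Set.range (fun o : Option ι => o.elim x u) = {x} ∪ Set.range u := by
  ext y
  constructor
  · rintro ⟨(_ | a), rfl⟩
    · left; rfl
    · right; exact ⟨a, rfl⟩
  · rintro (hy | ⟨a, rfl⟩)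
    · exact ⟨none, by simpa using hy.symm⟩
    · exact ⟨some a, rfl⟩
end Aux2


/- A zigzag module `V 0 ↔ V 1 ↔ ... ↔ V m` over `ZMod 2` is encoded by the
spaces `V i`, a direction function `dir` (`true` = forward), and linear maps
`fwd i : V i → V (i+1)` (relevant when `dir i = true`) and
`bwd i : V (i+1) → V i` (relevant when `dir i = false`). -/

/-- `b` is a positive index of the zigzag module: the map `ψ (b-1)` is a forward
injection with nontrivial cokernel or a backward surjection with nontrivial kernel. -/
def IsPos {V : ℕ → Type*} [∀ i, AddCommGroup (V i)] [∀ i, Module (ZMod 2) (V i)]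
    (m : ℕ) (dir : ℕ → Bool)
    (fwd : ∀ i, V i →ₗ[ZMod 2] V (i + 1)) (bwd : ∀ i, V (i + 1) →ₗ[ZMod 2] V i)
    (b : ℕ) : Prop :=
  ∃ i, b = i + 1 ∧ i < m ∧
    ((dir i = true ∧ Function.Injective (fwd i) ∧ ¬ Function.Surjective (fwd i)) ∨
     (dir i = false ∧ Function.Surjective (bwd i) ∧ ¬ Function.Injective (bwd i)))

/-- `i` is a negative index (with `i < m`): `ψ i` is a forward surjection with
nontrivial kernel or a backward injection with nontrivial cokernel.  (The
`rank (V m)` extra copies of `m` are accounted for separately.) -/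
def IsNeg {V : ℕ → Type*} [∀ i, AddCommGroup (V i)] [∀ i, Module (ZMod 2) (V i)]
    (m : ℕ) (dir : ℕ → Bool)
    (fwd : ∀ i, V i →ₗ[ZMod 2] V (i + 1)) (bwd : ∀ i, V (i + 1) →ₗ[ZMod 2] V i)
    (i : ℕ) : Prop :=
  i < m ∧
    ((dir i = true ∧ Function.Surjective (fwd i) ∧ ¬ Function.Injective (fwd i)) ∨
     (dir i = false ∧ Function.Injective (bwd i) ∧ ¬ Function.Surjective (bwd i)))

/-- The zigzag module is elementary: `V 0 = 0` and every map is an isomorphism,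
an injection with rank-1 cokernel, or a surjection with rank-1 kernel. -/
def Elementary {V : ℕ → Type*} [∀ i, AddCommGroup (V i)] [∀ i, Module (ZMod 2) (V i)]
    (m : ℕ) (dir : ℕ → Bool)
    (fwd : ∀ i, V i →ₗ[ZMod 2] V (i + 1)) (bwd : ∀ i, V (i + 1) →ₗ[ZMod 2] V i) : Prop :=
  (∀ x : V 0, x = 0) ∧
  ∀ i, i < m →
    (dir i = true →
      (Function.Bijective (fwd i) ∨
       (Function.Injective (fwd i) ∧
         Module.finrank (ZMod 2) (V (i + 1) ⧸ LinearMap.range (fwd i)) = 1) ∨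
       (Function.Surjective (fwd i) ∧
         Module.finrank (ZMod 2) (LinearMap.ker (fwd i)) = 1))) ∧
    (dir i = false →
      (Function.Bijective (bwd i) ∨
       (Function.Injective (bwd i) ∧
         Module.finrank (ZMod 2) (V i ⧸ LinearMap.range (bwd i)) = 1) ∨
       (Function.Surjective (bwd i) ∧
         Module.finrank (ZMod 2) (LinearMap.ker (bwd i)) = 1)))

/-- `α` is a set of representatives for the interval `[s, t] ⊆ [1, m]`:
consecutive values correspond under the maps, `α s` generates the new class born
at `s` (when `ψ (s-1)` is not an isomorphism in the relevant way), and `α t`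
dies at `t` (when `t < m`). Only the values `α i` for `s ≤ i ≤ t` are relevant. -/
def IsRep {V : ℕ → Type*} [∀ i, AddCommGroup (V i)] [∀ i, Module (ZMod 2) (V i)]
    (m : ℕ) (dir : ℕ → Bool)
    (fwd : ∀ i, V i →ₗ[ZMod 2] V (i + 1)) (bwd : ∀ i, V (i + 1) →ₗ[ZMod 2] V i)
    (s t : ℕ) (α : ∀ i, V i) : Prop :=
  1 ≤ s ∧ s ≤ t ∧ t ≤ m ∧
  (∀ i, s ≤ i → i < t →
    (dir i = true → fwd i (α i) = α (i + 1)) ∧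
    (dir i = false → bwd i (α (i + 1)) = α i)) ∧
  (∀ j, j + 1 = s →
    (dir j = true → ¬ Function.Surjective (fwd j) → α (j + 1) ∉ Set.range (fwd j)) ∧
    (dir j = false → ¬ Function.Injective (bwd j) →
      α (j + 1) ≠ 0 ∧ bwd j (α (j + 1)) = 0)) ∧
  (t < m →
    (dir t = false → ¬ Function.Surjective (bwd t) → α t ∉ Set.range (bwd t)) ∧
    (dir t = true → ¬ Function.Injective (fwd t) → α t ≠ 0 ∧ fwd t (α t) = 0))

/-- if `π` is a bijection from positive to negative indices (with
multiplicity `rank (V m)` at `m`) such that `b ≤ π b` and each interval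
`[b, π b]` admits representatives, then the module decomposes as the direct sum
of interval submodules over the `[b, π b]`: one can choose representatives
whose values at each index `i` form a basis of `V i`. -/
theorem stmt_2 {V : ℕ → Type*} [∀ i, AddCommGroup (V i)] [∀ i, Module (ZMod 2) (V i)]
    [∀ i, FiniteDimensional (ZMod 2) (V i)]
    (m : ℕ) (dir : ℕ → Bool)
    (fwd : ∀ i, V i →ₗ[ZMod 2] V (i + 1)) (bwd : ∀ i, V (i + 1) →ₗ[ZMod 2] V i)
    (helem : Elementary m dir fwd bwd)
    (π : ℕ → ℕ)
    (hπdom : ∀ b, IsPos m dir fwd bwd b →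
      b ≤ π b ∧ (IsNeg m dir fwd bwd (π b) ∨ π b = m))
    (hπinj : ∀ b b', IsPos m dir fwd bwd b → IsPos m dir fwd bwd b' →
      π b = π b' → π b < m → b = b')
    (hπsurj : ∀ i, IsNeg m dir fwd bwd i → ∃ b, IsPos m dir fwd bwd b ∧ π b = i)
    (hπm : {b | IsPos m dir fwd bwd b ∧ π b = m}.ncard = Module.finrank (ZMod 2) (V m))
    (hrep : ∀ b, IsPos m dir fwd bwd b →
      ∃ α : ∀ i, V i, IsRep m dir fwd bwd b (π b) α) :
    ∃ α : ℕ → ∀ i, V i,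
      (∀ b, IsPos m dir fwd bwd b → IsRep m dir fwd bwd b (π b) (α b)) ∧
      ∀ i, i ≤ m →
        LinearIndependent (ZMod 2)
          (fun b : {b : ℕ // IsPos m dir fwd bwd b ∧ b ≤ i ∧ i ≤ π b} => α b.1 i) ∧
        Submodule.span (ZMod 2)
          (Set.range
            (fun b : {b : ℕ // IsPos m dir fwd bwd b ∧ b ≤ i ∧ i ≤ π b} => α b.1 i)) = ⊤ := by
  classical
  obtain ⟨h0, helem2⟩ := helem
  set α : ℕ → ∀ i, V i := fun b =>
    if h : IsPos m dir fwd bwd b then Classical.choose (hrep b h) else fun _ => 0 with hαdef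
  have hα : ∀ b, IsPos m dir fwd bwd b → IsRep m dir fwd bwd b (π b) (α b) := by
    intro b hb
    simp only [hαdef, dif_pos hb]
    exact Classical.choose_spec (hrep b hb)
  refine ⟨α, hα, ?_⟩
  have hnoend : ∀ i, i < m → ¬ IsNeg m dir fwd bwd i →
      ∀ b, IsPos m dir fwd bwd b → π b ≠ i := by
    intro i him hneg b hb heq
    rcases (hπdom b hb).2 with h | h
    · rw [heq] at h; exact hneg h
    · omega
  intro i
  induction i with
  | zero =>
    intro _
    have hempty : IsEmpty {b : ℕ // IsPos m dir fwd bwd b ∧ b ≤ 0 ∧ 0 ≤ π b} := by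
      refine ⟨fun b => ?_⟩
      obtain ⟨⟨j, hj, _⟩, hb0, _⟩ := b.2
      omega
    constructor
    · exact linearIndependent_empty_type
    · rw [eq_top_iff]
      intro x _
      rw [h0 x]
      exact Submodule.zero_mem _
  | succ i ih =>
    intro him
    have hi : i < m := him
    obtain ⟨LI, SP⟩ := ih (Nat.le_of_succ_le him)
    cases hdi : dir i with
    | true =>
      rcases (helem2 i hi).1 hdi with hbij | ⟨hinj, hcor⟩ | ⟨hsurj, hkerr⟩
      · -- F-iso
        have hnneg : ¬ IsNeg m dir fwd bwd i := by
          rintro ⟨-, ⟨-, -, hni⟩ | ⟨hf, -, -⟩⟩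
          · exact hni hbij.1
          · rw [hdi] at hf; exact Bool.noConfusion hf
        have hnpos : ¬ IsPos m dir fwd bwd (i + 1) := by
          rintro ⟨j, hj, hjm, hcase⟩
          have hji : j = i := by omega
          subst hji
          rcases hcase with ⟨-, -, hns⟩ | ⟨hf, -, -⟩
          · exact hns hbij.2
          · rw [hdi] at hf; exact Bool.noConfusion hf
        have hiff : ∀ b, (IsPos m dir fwd bwd b ∧ b ≤ i + 1 ∧ i + 1 ≤ π b) ↔
            (IsPos m dir fwd bwd b ∧ b ≤ i ∧ i ≤ π b) := by
          intro b
          constructor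
          · rintro ⟨hb, hb1, hb2⟩
            have hbne : b ≠ i + 1 := fun h => hnpos (h ▸ hb)
            exact ⟨hb, by omega, by omega⟩
          · rintro ⟨hb, hb1, hb2⟩
            have hne := hnoend i hi hnneg b hb
            exact ⟨hb, by omega, by omega⟩
        let e := Equiv.subtypeEquivRight hiff
        have hval : ∀ b : {b : ℕ // IsPos m dir fwd bwd b ∧ b ≤ i + 1 ∧ i + 1 ≤ π b},
            α b.1 (i + 1) = fwd i (α b.1 i) := by
          intro b
          obtain ⟨hb, hb1, hb2⟩ := b.2
          have hbne : b.1 ≠ i + 1 := fun h => hnpos (h ▸ hb)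
          exact (((hα b.1 hb).2.2.2.1 i (by omega) (by omega)).1 hdi).symm
        have hker : LinearMap.ker (fwd i) = ⊥ := LinearMap.ker_eq_bot.mpr hbij.1
        have LI2 := (LI.comp e e.injective).map' (fwd i) hker
        have heq : (fun b : {b : ℕ // IsPos m dir fwd bwd b ∧ b ≤ i + 1 ∧ i + 1 ≤ π b} =>
            α b.1 (i + 1)) = fun b => fwd i (α b.1 i) := funext fun b => hval b
        constructor
        · rw [heq]
          exact LI2
        · rw [heq]
          have h1 : Set.range (fun b : {b : ℕ // IsPos m dir fwd bwd b ∧ b ≤ i + 1 ∧ i + 1 ≤ π b} =>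
              fwd i (α b.1 i))
              = fwd i '' Set.range (fun b : {b : ℕ // IsPos m dir fwd bwd b ∧ b ≤ i ∧ i ≤ π b} =>
                α b.1 i) := by
            ext x
            constructor
            · rintro ⟨b, rfl⟩; exact ⟨α b.1 i, ⟨e b, rfl⟩, rfl⟩
            · rintro ⟨y, ⟨a, rfl⟩, rfl⟩; exact ⟨e.symm a, rfl⟩
          rw [h1, ← Submodule.map_span, SP, Submodule.map_top, LinearMap.range_eq_top]
          exact hbij.2
      · -- F-birth
        have hnsurj := aux_not_surj _ hcor
        have hpos : IsPos m dir fwd bwd (i + 1) := ⟨i, rfl, hi, Or.inl ⟨hdi, hinj, hnsurj⟩⟩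
        have hnneg : ¬ IsNeg m dir fwd bwd i := by
          rintro ⟨-, ⟨-, -, hni⟩ | ⟨hf, -, -⟩⟩
          · exact hni hinj
          · rw [hdi] at hf; exact Bool.noConfusion hf
        have hnotin : α (i + 1) (i + 1) ∉ Set.range (fwd i) :=
          ((hα (i + 1) hpos).2.2.2.2.1 i rfl).1 hdi hnsurj
        have hmem_old : ∀ a : {b : ℕ // IsPos m dir fwd bwd b ∧ b ≤ i ∧ i ≤ π b},
            IsPos m dir fwd bwd a.1 ∧ a.1 ≤ i + 1 ∧ i + 1 ≤ π a.1 := by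
          intro a
          obtain ⟨ha, ha1, ha2⟩ := a.2
          have := hnoend i hi hnneg a.1 ha
          exact ⟨ha, by omega, by omega⟩
        have hπi1 : i + 1 ≤ π (i + 1) := (hπdom _ hpos).1
        let e : {b : ℕ // IsPos m dir fwd bwd b ∧ b ≤ i + 1 ∧ i + 1 ≤ π b} ≃
            Option {b : ℕ // IsPos m dir fwd bwd b ∧ b ≤ i ∧ i ≤ π b} :=
          { toFun := fun b => if h : b.1 = i + 1 then none else
              some ⟨b.1, b.2.1, by have := b.2.2.1; omega, by have := b.2.2.2; omega⟩
            invFun := fun o => o.elim ⟨i + 1, hpos, le_refl _, hπi1⟩ (fun a => ⟨a.1, hmem_old a⟩)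
            left_inv := fun b => by
              by_cases h : b.1 = i + 1
              · simp only [dif_pos h]
                exact Subtype.ext h.symm
              · simp only [dif_neg h]
                rfl
            right_inv := fun o => by
              cases o with
              | none => exact dif_pos rfl
              | some a =>
                have ha1 := a.2.2.1
                exact dif_neg (show ¬((a : ℕ) = i + 1) by omega) }
        have hval_old : ∀ a : {b : ℕ // IsPos m dir fwd bwd b ∧ b ≤ i ∧ i ≤ π b},
            fwd i (α a.1 i) = α a.1 (i + 1) := by
          intro a
          obtain ⟨ha, ha1, ha2⟩ := a.2
          have hne := hnoend i hi hnneg a.1 ha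
          exact ((hα a.1 ha).2.2.2.1 i ha1 (by omega)).1 hdi
        have heq : (fun b : {b : ℕ // IsPos m dir fwd bwd b ∧ b ≤ i + 1 ∧ i + 1 ≤ π b} =>
            α b.1 (i + 1)) =
            (fun o : Option {b : ℕ // IsPos m dir fwd bwd b ∧ b ≤ i ∧ i ≤ π b} =>
              o.elim (α (i + 1) (i + 1)) (fun a => fwd i (α a.1 i))) ∘ e := by
          funext b
          simp only [Function.comp_apply]
          by_cases h : b.1 = i + 1
          · rw [show e b = none from dif_pos h]
            show α b.1 (i + 1) = α (i + 1) (i + 1)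
            rw [h]
          · rw [show e b = some ⟨b.1, b.2.1, by have := b.2.2.1; omega,
              by have := b.2.2.2; omega⟩ from dif_neg h]
            show α b.1 (i + 1) = fwd i (α b.1 i)
            exact (hval_old ⟨b.1, b.2.1, by have := b.2.2.1; omega,
              by have := b.2.2.2; omega⟩).symm
        have hLIold : LinearIndependent (ZMod 2)
            (fun a : {b : ℕ // IsPos m dir fwd bwd b ∧ b ≤ i ∧ i ≤ π b} => fwd i (α a.1 i)) :=
          LI.map' (fwd i) (LinearMap.ker_eq_bot.mpr hinj)
        have hspan_le : Submodule.span (ZMod 2)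
            (Set.range (fun a : {b : ℕ // IsPos m dir fwd bwd b ∧ b ≤ i ∧ i ≤ π b} =>
              fwd i (α a.1 i))) ≤ LinearMap.range (fwd i) := by
          rw [Submodule.span_le]
          rintro x ⟨a, rfl⟩
          exact ⟨α a.1 i, rfl⟩
        have hnotin_span : α (i + 1) (i + 1) ∉ Submodule.span (ZMod 2)
            (Set.range (fun a : {b : ℕ // IsPos m dir fwd bwd b ∧ b ≤ i ∧ i ≤ π b} =>
              fwd i (α a.1 i))) := fun h => hnotin (hspan_le h)
        have hLIopt : LinearIndependent (ZMod 2)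
            (fun o : Option {b : ℕ // IsPos m dir fwd bwd b ∧ b ≤ i ∧ i ≤ π b} =>
              o.elim (α (i + 1) (i + 1)) (fun a => fwd i (α a.1 i))) := by
          rw [linearIndependent_option]
          exact ⟨hLIold, hnotin_span⟩
        constructor
        · rw [heq]
          exact hLIopt.comp e e.injective
        · rw [heq]
          rw [Function.Surjective.range_comp e.surjective]
          rw [aux_range_option]
          rw [Submodule.span_union]
          have h2 : Set.range (fun a : {b : ℕ // IsPos m dir fwd bwd b ∧ b ≤ i ∧ i ≤ π b} =>
              fwd i (α a.1 i)) = fwd i '' Set.range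
                (fun a : {b : ℕ // IsPos m dir fwd bwd b ∧ b ≤ i ∧ i ≤ π b} => α a.1 i) := by
            ext x
            constructor
            · rintro ⟨a, rfl⟩; exact ⟨α a.1 i, ⟨a, rfl⟩, rfl⟩
            · rintro ⟨y, ⟨a, rfl⟩, rfl⟩; exact ⟨a, rfl⟩
          rw [h2, ← Submodule.map_span, SP, Submodule.map_top]
          rw [sup_comm]
          exact aux_sup_span (LinearMap.range (fwd i)) hcor hnotin
      · -- F-death
        have hninj := aux_not_inj _ hkerr
        have hneg : IsNeg m dir fwd bwd i := ⟨hi, Or.inl ⟨hdi, hsurj, hninj⟩⟩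
        obtain ⟨b0, hb0pos, hb0i⟩ := hπsurj i hneg
        have hb0le : b0 ≤ i := by have := (hπdom b0 hb0pos).1; omega
        have hr0 := hα b0 hb0pos
        rw [hb0i] at hr0
        obtain ⟨hw0, hwk⟩ := (hr0.2.2.2.2.2 hi).2 hdi hninj
        have hker_eq : LinearMap.ker (fwd i) = (ZMod 2) ∙ (α b0 i) :=
          aux_eq_span _ hkerr (LinearMap.mem_ker.mpr hwk) hw0
        have hnpos : ¬ IsPos m dir fwd bwd (i + 1) := by
          rintro ⟨j, hj, hjm, hcase⟩
          have hji : j = i := by omega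
          subst hji
          rcases hcase with ⟨-, -, hns⟩ | ⟨hf, -, -⟩
          · exact hns hsurj
          · rw [hdi] at hf; exact Bool.noConfusion hf
        have huniq : ∀ b, IsPos m dir fwd bwd b → b ≠ b0 → π b ≠ i := by
          intro b hb hne heq'
          exact hne (hπinj b b0 hb hb0pos (by rw [heq', hb0i]) (by omega))
        have hb0A : IsPos m dir fwd bwd b0 ∧ b0 ≤ i ∧ i ≤ π b0 := ⟨hb0pos, hb0le, by omega⟩
        have hmem1 : ∀ b : {b : ℕ // IsPos m dir fwd bwd b ∧ b ≤ i + 1 ∧ i + 1 ≤ π b},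
            IsPos m dir fwd bwd b.1 ∧ b.1 ≤ i ∧ i ≤ π b.1 := by
          intro b
          obtain ⟨hb, hb1, hb2⟩ := b.2
          have : b.1 ≠ i + 1 := fun h => hnpos (h ▸ hb)
          exact ⟨hb, by omega, by omega⟩
        have hmemne : ∀ b : {b : ℕ // IsPos m dir fwd bwd b ∧ b ≤ i + 1 ∧ i + 1 ≤ π b},
            b.1 ≠ b0 := by
          intro b h
          obtain ⟨hb, hb1, hb2⟩ := b.2
          rw [h, hb0i] at hb2
          omega
        let e : {b : ℕ // IsPos m dir fwd bwd b ∧ b ≤ i + 1 ∧ i + 1 ≤ π b} ≃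
            {a : {b : ℕ // IsPos m dir fwd bwd b ∧ b ≤ i ∧ i ≤ π b} //
              a ≠ ⟨b0, hb0A⟩} :=
          { toFun := fun b => ⟨⟨b.1, hmem1 b⟩, fun h => hmemne b (congrArg Subtype.val h)⟩
            invFun := fun a => ⟨a.1.1, a.1.2.1, by have := a.1.2.2.1; omega, by
              have hne : a.1.1 ≠ b0 := fun h => a.2 (Subtype.ext h)
              have h1 := huniq a.1.1 a.1.2.1 hne
              have h2 := a.1.2.2.2
              omega⟩
            left_inv := fun b => rfl
            right_inv := fun a => rfl }
        have hval : ∀ b : {b : ℕ // IsPos m dir fwd bwd b ∧ b ≤ i + 1 ∧ i + 1 ≤ π b},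
            α b.1 (i + 1) = fwd i (α b.1 i) := by
          intro b
          obtain ⟨hb, hb1, hb2⟩ := b.2
          have h1 := hmem1 b
          exact (((hα b.1 hb).2.2.2.1 i h1.2.1 (by omega)).1 hdi).symm
        have LI2 := aux_map_li
          (fun a : {b : ℕ // IsPos m dir fwd bwd b ∧ b ≤ i ∧ i ≤ π b} => α a.1 i)
          LI ⟨b0, hb0A⟩ (fwd i) hker_eq
        have heq : (fun b : {b : ℕ // IsPos m dir fwd bwd b ∧ b ≤ i + 1 ∧ i + 1 ≤ π b} =>
            α b.1 (i + 1)) =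
            (fun a : {a : {b : ℕ // IsPos m dir fwd bwd b ∧ b ≤ i ∧ i ≤ π b} //
              a ≠ ⟨b0, hb0A⟩} => fwd i (α a.1.1 i)) ∘ e := funext fun b => hval b
        constructor
        · rw [heq]
          exact LI2.comp e e.injective
        · rw [heq]
          rw [Function.Surjective.range_comp e.surjective]
          have h2 : Set.range (fun a : {a : {b : ℕ // IsPos m dir fwd bwd b ∧ b ≤ i ∧ i ≤ π b} //
              a ≠ ⟨b0, hb0A⟩} => fwd i (α a.1.1 i))
              = fwd i '' Set.range (fun a : {a : {b : ℕ // IsPos m dir fwd bwd b ∧ b ≤ i ∧ i ≤ π b} //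
                a ≠ ⟨b0, hb0A⟩} => α a.1.1 i) := by
            ext x
            constructor
            · rintro ⟨a, rfl⟩; exact ⟨α a.1.1 i, ⟨a, rfl⟩, rfl⟩
            · rintro ⟨y, ⟨a, rfl⟩, rfl⟩; exact ⟨a, rfl⟩
          rw [h2, ← Submodule.map_span]
          have h3 := aux_map_span
            (fun a : {b : ℕ // IsPos m dir fwd bwd b ∧ b ≤ i ∧ i ≤ π b} => α a.1 i)
            ⟨b0, hb0A⟩ (fwd i) hwk
          rw [h3, SP, Submodule.map_top, LinearMap.range_eq_top]
          exact hsurj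
    | false =>
      rcases (helem2 i hi).2 hdi with hbij | ⟨hinj, hcor⟩ | ⟨hsurj, hkerr⟩
      · -- B-iso
        have hnneg : ¬ IsNeg m dir fwd bwd i := by
          rintro ⟨-, ⟨hf, -, -⟩ | ⟨-, -, hns⟩⟩
          · rw [hdi] at hf; exact Bool.noConfusion hf
          · exact hns hbij.2
        have hnpos : ¬ IsPos m dir fwd bwd (i + 1) := by
          rintro ⟨j, hj, hjm, hcase⟩
          have hji : j = i := by omega
          subst hji
          rcases hcase with ⟨hf, -, -⟩ | ⟨-, -, hni⟩
          · rw [hdi] at hf; exact Bool.noConfusion hf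
          · exact hni hbij.1
        have hiff : ∀ b, (IsPos m dir fwd bwd b ∧ b ≤ i + 1 ∧ i + 1 ≤ π b) ↔
            (IsPos m dir fwd bwd b ∧ b ≤ i ∧ i ≤ π b) := by
          intro b
          constructor
          · rintro ⟨hb, hb1, hb2⟩
            have hbne : b ≠ i + 1 := fun h => hnpos (h ▸ hb)
            exact ⟨hb, by omega, by omega⟩
          · rintro ⟨hb, hb1, hb2⟩
            have hne := hnoend i hi hnneg b hb
            exact ⟨hb, by omega, by omega⟩
        let e := Equiv.subtypeEquivRight hiff
        have hval : ∀ b : {b : ℕ // IsPos m dir fwd bwd b ∧ b ≤ i + 1 ∧ i + 1 ≤ π b},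
            bwd i (α b.1 (i + 1)) = α b.1 i := by
          intro b
          obtain ⟨hb, hb1, hb2⟩ := b.2
          have hbne : b.1 ≠ i + 1 := fun h => hnpos (h ▸ hb)
          exact ((hα b.1 hb).2.2.2.1 i (by omega) (by omega)).2 hdi
        constructor
        · apply LinearIndependent.of_comp (bwd i)
          have heq2 : (bwd i) ∘ (fun b : {b : ℕ // IsPos m dir fwd bwd b ∧ b ≤ i + 1 ∧ i + 1 ≤ π b} =>
              α b.1 (i + 1)) = fun b => α (e b).1 i := funext fun b => hval b
          rw [heq2]
          exact LI.comp e e.injective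
        · have hmap : Submodule.map (bwd i) (Submodule.span (ZMod 2)
              (Set.range (fun b : {b : ℕ // IsPos m dir fwd bwd b ∧ b ≤ i + 1 ∧ i + 1 ≤ π b} =>
                α b.1 (i + 1)))) = ⊤ := by
            rw [Submodule.map_span]
            have himg : bwd i '' Set.range (fun b : {b : ℕ // IsPos m dir fwd bwd b ∧
                b ≤ i + 1 ∧ i + 1 ≤ π b} => α b.1 (i + 1))
                = Set.range (fun b : {b : ℕ // IsPos m dir fwd bwd b ∧ b ≤ i ∧ i ≤ π b} =>
                  α b.1 i) := by
              ext x
              constructor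
              · rintro ⟨y, ⟨b, rfl⟩, rfl⟩; exact ⟨e b, (hval b).symm⟩
              · rintro ⟨a, rfl⟩; exact ⟨α (e.symm a).1 (i + 1), ⟨e.symm a, rfl⟩, hval (e.symm a)⟩
            rw [himg]
            exact SP
          have hcomap := congrArg (Submodule.comap (bwd i)) hmap
          rwa [Submodule.comap_map_eq, LinearMap.ker_eq_bot.mpr hbij.1, sup_bot_eq,
            Submodule.comap_top] at hcomap
      · -- B-death
        have hnsurj := aux_not_surj _ hcor
        have hneg : IsNeg m dir fwd bwd i := ⟨hi, Or.inr ⟨hdi, hinj, hnsurj⟩⟩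
        obtain ⟨b0, hb0pos, hb0i⟩ := hπsurj i hneg
        have hb0le : b0 ≤ i := by have := (hπdom b0 hb0pos).1; omega
        have hr0 := hα b0 hb0pos
        rw [hb0i] at hr0
        have hnotin : α b0 i ∉ Set.range (bwd i) := (hr0.2.2.2.2.2 hi).1 hdi hnsurj
        have hnpos : ¬ IsPos m dir fwd bwd (i + 1) := by
          rintro ⟨j, hj, hjm, hcase⟩
          have hji : j = i := by omega
          subst hji
          rcases hcase with ⟨hf, -, -⟩ | ⟨-, hs, -⟩
          · rw [hdi] at hf; exact Bool.noConfusion hf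
          · exact hnsurj hs
        have huniq : ∀ b, IsPos m dir fwd bwd b → b ≠ b0 → π b ≠ i := by
          intro b hb hne heq'
          exact hne (hπinj b b0 hb hb0pos (by rw [heq', hb0i]) (by omega))
        have hb0A : IsPos m dir fwd bwd b0 ∧ b0 ≤ i ∧ i ≤ π b0 := ⟨hb0pos, hb0le, by omega⟩
        have hmem1 : ∀ b : {b : ℕ // IsPos m dir fwd bwd b ∧ b ≤ i + 1 ∧ i + 1 ≤ π b},
            IsPos m dir fwd bwd b.1 ∧ b.1 ≤ i ∧ i ≤ π b.1 := by
          intro b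
          obtain ⟨hb, hb1, hb2⟩ := b.2
          have : b.1 ≠ i + 1 := fun h => hnpos (h ▸ hb)
          exact ⟨hb, by omega, by omega⟩
        have hmemne : ∀ b : {b : ℕ // IsPos m dir fwd bwd b ∧ b ≤ i + 1 ∧ i + 1 ≤ π b},
            b.1 ≠ b0 := by
          intro b h
          obtain ⟨hb, hb1, hb2⟩ := b.2
          rw [h, hb0i] at hb2
          omega
        let e : {b : ℕ // IsPos m dir fwd bwd b ∧ b ≤ i + 1 ∧ i + 1 ≤ π b} ≃
            {a : {b : ℕ // IsPos m dir fwd bwd b ∧ b ≤ i ∧ i ≤ π b} //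
              a ≠ ⟨b0, hb0A⟩} :=
          { toFun := fun b => ⟨⟨b.1, hmem1 b⟩, fun h => hmemne b (congrArg Subtype.val h)⟩
            invFun := fun a => ⟨a.1.1, a.1.2.1, by have := a.1.2.2.1; omega, by
              have hne : a.1.1 ≠ b0 := fun h => a.2 (Subtype.ext h)
              have h1 := huniq a.1.1 a.1.2.1 hne
              have h2 := a.1.2.2.2
              omega⟩
            left_inv := fun b => rfl
            right_inv := fun a => rfl }
        have hval : ∀ b : {b : ℕ // IsPos m dir fwd bwd b ∧ b ≤ i + 1 ∧ i + 1 ≤ π b},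
            bwd i (α b.1 (i + 1)) = α b.1 i := by
          intro b
          obtain ⟨hb, hb1, hb2⟩ := b.2
          have h1 := hmem1 b
          exact ((hα b.1 hb).2.2.2.1 i h1.2.1 (by omega)).2 hdi
        constructor
        · apply LinearIndependent.of_comp (bwd i)
          have heq2 : (bwd i) ∘ (fun b : {b : ℕ // IsPos m dir fwd bwd b ∧ b ≤ i + 1 ∧ i + 1 ≤ π b} =>
              α b.1 (i + 1)) =
              (fun a : {a : {b : ℕ // IsPos m dir fwd bwd b ∧ b ≤ i ∧ i ≤ π b} //
                a ≠ ⟨b0, hb0A⟩} => α a.1.1 i) ∘ e := funext fun b => hval b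
          rw [heq2]
          exact (LI.comp Subtype.val Subtype.val_injective).comp e e.injective
        · apply aux_binj_span (bwd i) hinj _ (α b0 i) (fun h => hnotin h)
          have h1 : Set.range (fun a : {b : ℕ // IsPos m dir fwd bwd b ∧ b ≤ i + 1 ∧ i + 1 ≤ π b} =>
              bwd i (α a.1 (i + 1)))
              = Set.range (fun a : {a : {b : ℕ // IsPos m dir fwd bwd b ∧ b ≤ i ∧ i ≤ π b} //
                a ≠ ⟨b0, hb0A⟩} => α a.1.1 i) := by
            ext x
            constructor
            · rintro ⟨b, rfl⟩
              exact ⟨e b, (hval b).symm⟩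
            · rintro ⟨a, rfl⟩
              refine ⟨e.symm a, ?_⟩
              exact hval (e.symm a)
          rw [h1]
          have h2 := aux_range_split
            (fun a : {b : ℕ // IsPos m dir fwd bwd b ∧ b ≤ i ∧ i ≤ π b} => α a.1 i)
            ⟨b0, hb0A⟩
          rw [h2, Submodule.span_union] at SP
          exact SP
      · -- B-birth
        have hninj := aux_not_inj _ hkerr
        have hpos : IsPos m dir fwd bwd (i + 1) := ⟨i, rfl, hi, Or.inr ⟨hdi, hsurj, hninj⟩⟩
        have hnneg : ¬ IsNeg m dir fwd bwd i := by
          rintro ⟨-, ⟨hf, -, -⟩ | ⟨-, hinj', -⟩⟩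
          · rw [hdi] at hf; exact Bool.noConfusion hf
          · exact hninj hinj'
        obtain ⟨hv0, hvk⟩ := ((hα (i + 1) hpos).2.2.2.2.1 i rfl).2 hdi hninj
        have hker_eq : LinearMap.ker (bwd i) = (ZMod 2) ∙ (α (i + 1) (i + 1)) :=
          aux_eq_span _ hkerr (LinearMap.mem_ker.mpr hvk) hv0
        have hmem_old : ∀ a : {b : ℕ // IsPos m dir fwd bwd b ∧ b ≤ i ∧ i ≤ π b},
            IsPos m dir fwd bwd a.1 ∧ a.1 ≤ i + 1 ∧ i + 1 ≤ π a.1 := by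
          intro a
          obtain ⟨ha, ha1, ha2⟩ := a.2
          have := hnoend i hi hnneg a.1 ha
          exact ⟨ha, by omega, by omega⟩
        have hπi1 : i + 1 ≤ π (i + 1) := (hπdom _ hpos).1
        let e : {b : ℕ // IsPos m dir fwd bwd b ∧ b ≤ i + 1 ∧ i + 1 ≤ π b} ≃
            Option {b : ℕ // IsPos m dir fwd bwd b ∧ b ≤ i ∧ i ≤ π b} :=
          { toFun := fun b => if h : b.1 = i + 1 then none else
              some ⟨b.1, b.2.1, by have := b.2.2.1; omega, by have := b.2.2.2; omega⟩
            invFun := fun o => o.elim ⟨i + 1, hpos, le_refl _, hπi1⟩ (fun a => ⟨a.1, hmem_old a⟩)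
            left_inv := fun b => by
              by_cases h : b.1 = i + 1
              · simp only [dif_pos h]
                exact Subtype.ext h.symm
              · simp only [dif_neg h]
                rfl
            right_inv := fun o => by
              cases o with
              | none => exact dif_pos rfl
              | some a =>
                have ha1 := a.2.2.1
                exact dif_neg (show ¬((a : ℕ) = i + 1) by omega) }
        have hval_old : ∀ a : {b : ℕ // IsPos m dir fwd bwd b ∧ b ≤ i ∧ i ≤ π b},
            bwd i (α a.1 (i + 1)) = α a.1 i := by
          intro a
          obtain ⟨ha, ha1, ha2⟩ := a.2
          have hne := hnoend i hi hnneg a.1 ha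
          exact ((hα a.1 ha).2.2.2.1 i ha1 (by omega)).2 hdi
        have hLIb : LinearIndependent (ZMod 2)
            (fun a : {b : ℕ // IsPos m dir fwd bwd b ∧ b ≤ i ∧ i ≤ π b} =>
              bwd i (α a.1 (i + 1))) := by
          have : (fun a : {b : ℕ // IsPos m dir fwd bwd b ∧ b ≤ i ∧ i ≤ π b} =>
              bwd i (α a.1 (i + 1))) = fun a => α a.1 i := funext fun a => hval_old a
          rw [this]
          exact LI
        have hLIopt := aux_bsurj_li (bwd i)
          (fun a : {b : ℕ // IsPos m dir fwd bwd b ∧ b ≤ i ∧ i ≤ π b} => α a.1 (i + 1))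
          (α (i + 1) (i + 1)) hLIb hv0 hvk
        have heq : (fun b : {b : ℕ // IsPos m dir fwd bwd b ∧ b ≤ i + 1 ∧ i + 1 ≤ π b} =>
            α b.1 (i + 1)) =
            (fun o : Option {b : ℕ // IsPos m dir fwd bwd b ∧ b ≤ i ∧ i ≤ π b} =>
              o.elim (α (i + 1) (i + 1)) (fun a => α a.1 (i + 1))) ∘ e := by
          funext b
          simp only [Function.comp_apply]
          by_cases h : b.1 = i + 1
          · rw [show e b = none from dif_pos h]
            show α b.1 (i + 1) = α (i + 1) (i + 1)
            rw [h]
          · rw [show e b = some ⟨b.1, b.2.1, by have := b.2.2.1; omega,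
              by have := b.2.2.2; omega⟩ from dif_neg h]
            rfl
        constructor
        · rw [heq]
          exact hLIopt.comp e e.injective
        · rw [heq]
          rw [Function.Surjective.range_comp e.surjective]
          rw [aux_range_option]
          rw [Submodule.span_union]
          apply aux_bsurj_span (bwd i)
            (fun a : {b : ℕ // IsPos m dir fwd bwd b ∧ b ≤ i ∧ i ≤ π b} => α a.1 (i + 1))
            (α (i + 1) (i + 1)) hker_eq
          have : (fun a : {b : ℕ // IsPos m dir fwd bwd b ∧ b ≤ i ∧ i ≤ π b} =>
              bwd i (α a.1 (i + 1))) = fun a => α a.1 i := funext fun a => hval_old a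
          rw [this]
          exact SP
end

section
/- Let ∅ = G_0 ↔ ... ↔ G_m be a zigzag filtration of a finite graph where each edge, when added at step j−1 (from G_{j−1} to G_j), is assigned weight j−1. For indices j ≤ i, let Γ_j^i be the graph on all vertices whose edge set consists of the edges of G_i that were, in the filtration, not deleted between steps j and i−1 starting from G_j. Then the edge set of Γ_j^i equals the set of edges of G_i whose weight is less than j. -/
open scoped Classical

/-- A single step of a zigzag filtration of graphs: add an edge, delete an edge,
or a step that does not change the edge set (addition/deletion of a vertex). -/
inductive GOp (V : Type*)
  | add (e : Sym2 V) : GOp V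
  | del (e : Sym2 V) : GOp V
  | vert : GOp V

/-- The zigzag filtration of graphs determined by the sequence of operations
`op`, starting from the empty graph. -/
noncomputable def filt {V : Type*} (op : ℕ → GOp V) : ℕ → SimpleGraph V
  | 0 => ⊥
  | n + 1 =>
    match op n with
    | .add e => SimpleGraph.fromEdgeSet ((filt op n).edgeSet ∪ {e})
    | .del e => (filt op n).deleteEdges {e}
    | .vert => filt op n

/-- The weight of an edge at time `i`: the index of its most recent addition
(edges added at step `k`, i.e. from `G k` to `G (k+1)`, get weight `k`). -/
noncomputable def wt {V : Type*} (op : ℕ → GOp V) : ℕ → Sym2 V → ℕ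
  | 0 => fun _ => 0
  | n + 1 => fun e =>
    match op n with
    | .add e' => if e = e' then n else wt op n e
    | _ => wt op n e

lemma wt_lt {V : Type*} (op : ℕ → GOp V) : ∀ n e, e ∈ (filt op n).edgeSet → wt op n e < n := by
  intro n
  induction n with
  | zero => intro e he; simp [filt] at he
  | succ n ih =>
    intro e he
    cases hop : op n with
    | add e' =>
      simp only [filt, wt, hop] at he ⊢
      by_cases h : e = e'
      · simp [h]
      · simp only [if_neg h]
        rw [SimpleGraph.edgeSet_fromEdgeSet] at he
        have : e ∈ (filt op n).edgeSet := by
          rcases he.1 with h1 | h1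
          · exact h1
          · exact absurd h1 h
        exact (ih e this).trans (Nat.lt_succ_self n)
    | del e' =>
      simp only [filt, wt, hop] at he ⊢
      rw [SimpleGraph.edgeSet_deleteEdges] at he
      exact (ih e he.1).trans (Nat.lt_succ_self n)
    | vert =>
      simp only [filt, wt, hop] at he ⊢
      exact (ih e he).trans (Nat.lt_succ_self n)

/-- in a zigzag filtration `∅ = G 0 ↔ G 1 ↔ ...` of graphs with
each added edge weighted by its (most recent) addition index, the graph
`Γ_j^i`, obtained from `G j` by removing every edge deleted by a backward step
between indices `j` and `i - 1`, has edge set exactly the edges of `G i` of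
weight less than `j`. -/
theorem stmt_15 {V : Type*} (op : ℕ → GOp V)
    (hwf : ∀ k, (∀ e, op k = GOp.add e → ¬ e.IsDiag ∧ e ∉ (filt op k).edgeSet) ∧
      (∀ e, op k = GOp.del e → e ∈ (filt op k).edgeSet)) :
    ∀ i j, j ≤ i →
      (filt op j).edgeSet \ {e | ∃ k, j ≤ k ∧ k < i ∧ op k = GOp.del e} =
        {e ∈ (filt op i).edgeSet | wt op i e < j} := by
  intro i j hji
  induction i, hji using Nat.le_induction with
  | base =>
    ext e
    simp only [Set.mem_diff, Set.mem_setOf_eq]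
    constructor
    · rintro ⟨he, -⟩; exact ⟨he, wt_lt op j e he⟩
    · rintro ⟨he, -⟩
      refine ⟨he, ?_⟩
      rintro ⟨k, hk1, hk2, -⟩
      exact absurd (hk1.trans_lt hk2) (lt_irrefl j)
  | succ i hji ih =>
    have ihe := fun e => Set.ext_iff.mp ih e
    ext e
    have hD : (∃ k, j ≤ k ∧ k < i + 1 ∧ op k = GOp.del e) ↔
        (∃ k, j ≤ k ∧ k < i ∧ op k = GOp.del e) ∨ op i = GOp.del e := by
      constructor
      · rintro ⟨k, hk1, hk2, hk3⟩
        rcases Nat.lt_succ_iff_lt_or_eq.mp hk2 with h | h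
        · exact Or.inl ⟨k, hk1, h, hk3⟩
        · subst h; exact Or.inr hk3
      · rintro (⟨k, hk1, hk2, hk3⟩ | h)
        · exact ⟨k, hk1, hk2.trans (Nat.lt_succ_self i), hk3⟩
        · exact ⟨i, hji, Nat.lt_succ_self i, h⟩
    have hie := ihe e
    simp only [Set.mem_diff, Set.mem_setOf_eq] at hie ⊢
    rw [hD]
    cases hop : op i with
    | add e' =>
      have hwe := (hwf i).1 e' hop
      simp only [filt, wt, hop, SimpleGraph.edgeSet_fromEdgeSet, Set.mem_diff,
        Set.mem_union, Set.mem_singleton_iff, Set.mem_setOf_eq]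
      by_cases h : e = e'
      · subst h
        constructor
        · rintro ⟨he, hnd⟩
          exfalso
          have : e ∈ (filt op i).edgeSet := (hie.mp ⟨he, fun c => hnd (Or.inl c)⟩).1
          exact hwe.2 this
        · rintro ⟨-, hlt⟩
          simp only [if_pos rfl] at hlt
          exact absurd hji (Nat.not_le_of_lt hlt)
      · constructor
        · rintro ⟨he, hnd⟩
          have h1 : e ∈ (filt op i).edgeSet ∧ wt op i e < j :=
            hie.mp ⟨he, fun c => hnd (Or.inl c)⟩
          refine ⟨⟨Or.inl h1.1, SimpleGraph.not_isDiag_of_mem_edgeSet _ h1.1⟩, ?_⟩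
          simpa [if_neg h] using h1.2
        · rintro ⟨⟨hm, hnd⟩, hlt⟩
          have hm' : e ∈ (filt op i).edgeSet := by
            rcases hm with h1 | h1
            · exact h1
            · exact absurd h1 h
          simp only [if_neg h] at hlt
          have := hie.mpr ⟨hm', hlt⟩
          refine ⟨this.1, ?_⟩
          rintro (c | c)
          · exact this.2 c
          · exact nomatch c
    | del e' =>
      simp only [filt, wt, hop, SimpleGraph.edgeSet_deleteEdges, Set.mem_diff,
        Set.mem_singleton_iff]
      constructor
      · rintro ⟨he, hnd⟩
        have h1 := hie.mp ⟨he, fun c => hnd (Or.inl c)⟩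
        have hne : e ≠ e' := by
          intro hc; subst hc
          exact hnd (Or.inr rfl)
        exact ⟨⟨h1.1, hne⟩, h1.2⟩
      · rintro ⟨⟨hm, hne⟩, hlt⟩
        have := hie.mpr ⟨hm, hlt⟩
        refine ⟨this.1, ?_⟩
        rintro (c | c)
        · exact this.2 c
        · injection c with h'
          exact hne h'.symm
    | vert =>
      simp only [filt, wt, hop]
      constructor
      · rintro ⟨he, hnd⟩
        exact hie.mp ⟨he, fun c => hnd (Or.inl c)⟩
      · rintro ⟨hm, hlt⟩
        have := hie.mpr ⟨hm, hlt⟩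
        refine ⟨this.1, ?_⟩
        rintro (c | c)
        · exact this.2 c
        · exact nomatch c
end

section
/- Let G be a finite graph with distinct edge weights, let u, v be connected vertices, and let P be the unique u–v path in the minimum spanning forest T of G. If e is the maximum-weight edge of P with w(e) = k, then u and v are not connected in the subgraph G_{<k} (edges of weight < k) but are connected in G_{<k'} for any k' > k. -/
open scoped Classical

open SimpleGraph in
/-- A path containing an edge `e` can be split into a pre-`e` part and a post-`e` part,
neither of which contains `e`. -/
lemma walk_split {V : Type*} {T : SimpleGraph V} :
    ∀ {u v : V} (p : T.Walk u v), p.edges.Nodup → ∀ e ∈ p.edges,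
      ∃ x y, e = s(x, y) ∧ ∃ (q1 : T.Walk u x) (q2 : T.Walk y v),
        e ∉ q1.edges ∧ e ∉ q2.edges := by
  intro u v p
  induction p with
  | nil => simp
  | @cons u c v h q ih =>
    intro hnd e he
    simp only [Walk.edges_cons, List.nodup_cons] at hnd
    by_cases hec : e = s(u, c)
    · subst hec
      exact ⟨u, c, rfl, Walk.nil, q, by simp, hnd.1⟩
    · have he' : e ∈ q.edges := by
        rcases List.mem_cons.mp he with h1 | h1
        · exact absurd h1 hec
        · exact h1
      obtain ⟨x, y, hexy, q1, q2, h1, h2⟩ := ih hnd.2 e he'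
      refine ⟨x, y, hexy, Walk.cons h q1, q2, ?_, h2⟩
      simp only [Walk.edges_cons, List.mem_cons]
      rintro (h3 | h3)
      · exact hec h3
      · exact h1 h3

open SimpleGraph

/-- let `e` be the maximum-weight edge (weight `k`) of the unique
`u`–`v` path in the unique MSF `T` of `G` (distinct edge weights). Then `u`, `v`
are not connected in `G_{<k}` but are connected in `G_{<k'}` for every `k' > k`. -/
theorem stmt_19 {V : Type*} [Fintype V] (w : Sym2 V → ℝ) (G T : SimpleGraph V)
    (hdist : Set.InjOn w G.edgeSet) (hMSF : IsUniqueMSF w G T)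
    (u v : V) (huv : G.Reachable u v) (p : T.Walk u v) (hp : p.IsPath)
    (e : Sym2 V) (he : e ∈ p.edges) (hemax : ∀ f ∈ p.edges, w f ≤ w e)
    (k : ℝ) (hk : w e = k) :
    ¬ (SimpleGraph.fromEdgeSet {f | f ∈ G.edgeSet ∧ w f < k}).Reachable u v ∧
      ∀ k' : ℝ, k < k' →
        (SimpleGraph.fromEdgeSet {f | f ∈ G.edgeSet ∧ w f < k'}).Reachable u v := by
  subst hk
  obtain ⟨hTG, hac, hreach, hmin⟩ := hMSF
  have heT : e ∈ T.edgeSet := p.edges_subset_edgeSet he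
  -- Part 2: for k' > w e, the path p lives inside G_{<k'}
  have part2 : ∀ k', w e < k' →
      (fromEdgeSet {f | f ∈ G.edgeSet ∧ w f < k'}).Reachable u v := by
    intro k' hk'
    have hsub : ∀ f ∈ p.edges,
        f ∈ (fromEdgeSet {f | f ∈ G.edgeSet ∧ w f < k'}).edgeSet := by
      intro f hf
      rw [edgeSet_fromEdgeSet]
      have hfT := p.edges_subset_edgeSet hf
      exact ⟨⟨edgeSet_mono hTG hfT, lt_of_le_of_lt (hemax f hf) hk'⟩,
        T.not_isDiag_of_mem_edgeSet hfT⟩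
    exact (p.transfer _ hsub).reachable
  refine ⟨?_, part2⟩
  -- Part 1: u and v are not connected in G_{<w e}
  intro hcon
  set H := fromEdgeSet {f | f ∈ G.edgeSet ∧ w f < w e} with hH
  set T' := T.deleteEdges {e} with hT'
  have hT'T : T' ≤ T := T.deleteEdges_le _
  -- walks in T avoiding e give reachability in T'
  have toT' : ∀ {a b : V} (q : T.Walk a b), e ∉ q.edges → T'.Reachable a b := by
    intro a b q hq
    refine (q.transfer T' ?_).reachable
    intro f hf
    rw [hT', edgeSet_deleteEdges]
    exact ⟨q.edges_subset_edgeSet hf, fun hfe => hq (Set.mem_singleton_iff.mp hfe ▸ hf)⟩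
  -- split the path p at e
  obtain ⟨x, y, hexy, q1, q2, h1, h2⟩ := walk_split p hp.edges_nodup e he
  have Rux : T'.Reachable u x := toT' q1 h1
  have Ryv : T'.Reachable y v := toT' q2 h2
  -- e is a bridge of T, so x and y are not connected in T'
  have hbridgeT : T.IsBridge e := isAcyclic_iff_forall_edge_isBridge.mp hac heT
  have hnxy : ¬ T'.Reachable x y := by
    rw [hexy] at hbridgeT
    have h := isBridge_iff.mp hbridgeT
    rw [hT', hexy]
    exact h
  have hnuv : ¬ T'.Reachable u v := fun h =>
    hnxy (Rux.symm.trans (h.trans Ryv.symm))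
  -- every vertex T-reachable from u is T'-reachable from u or from v
  have twoClass : ∀ z, T.Reachable u z → T'.Reachable u z ∨ T'.Reachable v z := by
    intro z hz
    obtain ⟨q⟩ := hz
    by_cases heq : e ∈ (q.toPath : T.Walk u z).edges
    · obtain ⟨x', y', hexy', r1, r2, hr1, hr2⟩ :=
        walk_split _ (q.toPath.2.edges_nodup) e heq
      have Rux' : T'.Reachable u x' := toT' r1 hr1
      have Ry'z : T'.Reachable y' z := toT' r2 hr2
      rw [hexy] at hexy'
      obtain ⟨rfl, rfl⟩ | ⟨rfl, rfl⟩ := Sym2.eq_iff.mp hexy'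
      · right; exact Ryv.symm.trans Ry'z
      · left; exact Rux.trans Ry'z
    · exact Or.inl (toT' _ heq)
  -- find a crossing edge on the walk in G_{<w e}
  have cross : ∀ {c d : V} (q : H.Walk c d), T'.Reachable u c → ¬ T'.Reachable u d →
      ∃ a b, H.Adj a b ∧ T'.Reachable u a ∧ T'.Reachable v b := by
    intro c d q
    induction q with
    | nil => exact fun hc hd => absurd hc hd
    | @cons c m d hadj q ih =>
      intro hc hd
      by_cases hm : T'.Reachable u m
      · exact ih hm hd
      · have hGcm : G.Adj c m := by
          rw [hH, fromEdgeSet_adj] at hadj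
          exact (G.mem_edgeSet).mp hadj.1.1
        have hTum : T.Reachable u m :=
          (hc.mono hT'T).trans ((hreach c m).mp hGcm.reachable)
        rcases twoClass m hTum with h | h
        · exact absurd h hm
        · exact ⟨c, m, hadj, hc, h⟩
  obtain ⟨qH⟩ := hcon
  obtain ⟨a, b, hab, Rua, Rvb⟩ := cross qH (Reachable.refl u) hnuv
  rw [hH, fromEdgeSet_adj] at hab
  obtain ⟨⟨hfG, hfw⟩, hne⟩ := hab
  have hnab : ¬ T'.Reachable a b := fun h =>
    hnuv (Rua.trans (h.trans Rvb.symm))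
  have hfe : s(a, b) ≠ e := fun h => absurd (h ▸ hfw) (lt_irrefl _)
  have hfnT : s(a, b) ∉ T.edgeSet := by
    intro hfT
    apply hnab
    have : T'.Adj a b := by
      rw [hT', deleteEdges_adj]
      exact ⟨(T.mem_edgeSet).mp hfT, fun h => hfe (Set.mem_singleton_iff.mp h)⟩
    exact this.reachable
  -- the exchanged forest
  set T'' := T' ⊔ fromEdgeSet {s(a, b)} with hT''
  have hadjT'' : T''.Adj a b := by
    rw [hT'', sup_adj, fromEdgeSet_adj]
    exact Or.inr ⟨rfl, hne⟩
  have hT''edge : T''.edgeSet = (T.edgeSet \ {e}) ∪ {s(a, b)} := by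
    rw [hT'', edgeSet_sup, hT', edgeSet_deleteEdges, edgeSet_fromEdgeSet]
    congr 1
    ext g
    simp only [Set.mem_diff, Set.mem_singleton_iff, Set.mem_setOf_eq,
      and_iff_left_iff_imp]
    rintro rfl
    simp [Sym2.isDiag_iff_proj_eq, hne]
  have hT''G : T'' ≤ G := by
    rw [hT'']
    refine sup_le (hT'T.trans hTG) ?_
    intro c d hcd
    rw [fromEdgeSet_adj] at hcd
    have : s(c, d) ∈ G.edgeSet := Set.mem_singleton_iff.mp hcd.1 ▸ hfG
    exact (G.mem_edgeSet).mp this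
  -- reachability in T implies reachability in T''
  have hxyT'' : T''.Reachable x y := by
    have hxa : T'.Reachable x a := Rux.symm.trans Rua
    have hby : T'.Reachable b y := Rvb.symm.trans Ryv.symm
    exact ((hxa.mono le_sup_left).trans hadjT''.reachable).trans (hby.mono le_sup_left)
  have hT''ofT : ∀ a' b' : V, T.Reachable a' b' → T''.Reachable a' b' := by
    intro a' b' h
    obtain ⟨q⟩ := h
    induction q with
    | nil => exact Reachable.refl _
    | @cons c d b' hadj q ih =>
      refine Reachable.trans ?_ ih
      by_cases hce : s(c, d) = e
      · rw [hexy] at hce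
        rcases Sym2.eq_iff.mp hce with ⟨hx, hy⟩ | ⟨hx, hy⟩
        · rw [← hx, ← hy] at hxyT''; exact hxyT''
        · rw [← hx, ← hy] at hxyT''; exact hxyT''.symm
      · have : T''.Adj c d := by
          rw [hT'', sup_adj, hT', deleteEdges_adj]
          exact Or.inl ⟨hadj, fun h => hce (Set.mem_singleton_iff.mp h)⟩
        exact this.reachable
  -- T'' is acyclic
  have hT'ac : T'.IsAcyclic := by
    intro z c hc
    exact hac (c.transfer T (fun f hf =>
      (edgeSet_mono hT'T) (c.edges_subset_edgeSet hf))) (hc.transfer _)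
  have hT''ac : T''.IsAcyclic := by
    intro z c hc
    by_cases hfc : s(a, b) ∈ c.edges
    · have hbridge : T''.IsBridge s(a, b) := by
        rw [isBridge_iff]
        intro hr
        apply hnab
        refine hr.mono ?_
        intro c' d' hcd
        rw [deleteEdges_adj] at hcd
        obtain ⟨hcd1, hcd2⟩ := hcd
        rw [hT'', sup_adj] at hcd1
        rcases hcd1 with h | h
        · exact h
        · exact absurd ((fromEdgeSet_adj _).mp h).1 hcd2
      exact (isBridge_iff_forall_cycle_notMem hadjT'').mp hbridge c hc hfc
    · have hsub : ∀ g ∈ c.edges, g ∈ T'.edgeSet := by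
        intro g hg
        have hgT'' := c.edges_subset_edgeSet hg
        rw [hT''edge] at hgT''
        rcases hgT'' with h | h
        · rw [hT', edgeSet_deleteEdges]; exact h
        · exact absurd (Set.mem_singleton_iff.mp h ▸ hg) hfc
      exact hT'ac (c.transfer T' hsub) (hc.transfer hsub)
  have hT''reach : ∀ a' b' : V, G.Reachable a' b' ↔ T''.Reachable a' b' :=
    fun a' b' => ⟨fun h => hT''ofT a' b' ((hreach a' b').mp h),
      fun h => h.mono hT''G⟩
  have hT''ne : T'' ≠ T := by
    intro hEq
    apply hfnT
    rw [← hEq]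
    exact hadjT''
  -- weight comparison
  have hfinset : (Set.toFinite T''.edgeSet).toFinset =
      insert (s(a, b)) (((Set.toFinite T.edgeSet).toFinset).erase e) := by
    ext g
    simp only [Set.Finite.mem_toFinset, hT''edge, Set.mem_union, Set.mem_diff,
      Set.mem_singleton_iff, Finset.mem_insert, Finset.mem_erase,
      Set.Finite.mem_toFinset]
    tauto
  have hwlt : weightSum w T'' < weightSum w T := by
    rw [weightSum, weightSum, hfinset, Finset.sum_insert (by
      intro hmem
      exact hfnT (Set.Finite.mem_toFinset _ |>.mp (Finset.mem_of_mem_erase hmem)))]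
    have hsum := Finset.add_sum_erase _ w
      (show e ∈ (Set.toFinite T.edgeSet).toFinset from (Set.Finite.mem_toFinset _).mpr heT)
    linarith
  have := hmin T'' hT''G hT''ac hT''reach hT''ne
  linarith
end
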